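/- arXiv:1603.01469 — 5 statements merged into one kernel-verified Lean document; each statement's English description precedes it below -/
import Mathlib

section
/- Let 0 < κ < 1, b₁, b₂ > 0 and m₁ ≠ m₂ unit vectors in ℝ³. If x is a unit vector with b₁/(1 - κ m₁·x) ≤ b₂/(1 - κ m₂·x) (and both denominators positive), then x · (b₁m₂ - b₂m₁)/|b₁m₂ - b₂m₁| ≥ (b₁ - b₂)/(κ |b₁m₂ - b₂m₁|); consequently the set V₁₂ = { x ∈ S² : b₁/(1-κ m₁·x) ≤ b₂/(1-κ m₂·x) } is contained in the geodesic disk on S² with center A₁₂ = (b₁m₂ - b₂m₁)/|b₁m₂ - b₂m₁| and radius arccos( (b₁-b₂)/(κ|b₁m₂-b₂m₁|) ), and V₁₂ is nonempty only if (b₁-b₂)/(κ|b₁m₂-b₂m₁|) ≤ 1. -/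
open scoped RealInnerProductSpace

theorem stmt1 (κ b₁ b₂ : ℝ) (hκ : 0 < κ) (hκ1 : κ < 1) (hb₁ : 0 < b₁) (hb₂ : 0 < b₂)
    (m₁ m₂ : EuclideanSpace ℝ (Fin 3)) (hm₁ : ‖m₁‖ = 1) (hm₂ : ‖m₂‖ = 1) (hmm : m₁ ≠ m₂) :
    (∀ x : EuclideanSpace ℝ (Fin 3), ‖x‖ = 1 →
      b₁ / (1 - κ * ⟪m₁, x⟫) ≤ b₂ / (1 - κ * ⟪m₂, x⟫) →
      (b₁ - b₂) / (κ * ‖b₁ • m₂ - b₂ • m₁‖) ≤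
        ⟪x, (‖b₁ • m₂ - b₂ • m₁‖)⁻¹ • (b₁ • m₂ - b₂ • m₁)⟫) ∧
    ({x : EuclideanSpace ℝ (Fin 3) | ‖x‖ = 1 ∧
        b₁ / (1 - κ * ⟪m₁, x⟫) ≤ b₂ / (1 - κ * ⟪m₂, x⟫)} ⊆
      {x : EuclideanSpace ℝ (Fin 3) | ‖x‖ = 1 ∧
        Real.cos (Real.arccos ((b₁ - b₂) / (κ * ‖b₁ • m₂ - b₂ • m₁‖))) ≤
          ⟪x, (‖b₁ • m₂ - b₂ • m₁‖)⁻¹ • (b₁ • m₂ - b₂ • m₁)⟫}) ∧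
    ({x : EuclideanSpace ℝ (Fin 3) | ‖x‖ = 1 ∧
        b₁ / (1 - κ * ⟪m₁, x⟫) ≤ b₂ / (1 - κ * ⟪m₂, x⟫)}.Nonempty →
      (b₁ - b₂) / (κ * ‖b₁ • m₂ - b₂ • m₁‖) ≤ 1) := by
  set v : EuclideanSpace ℝ (Fin 3) := b₁ • m₂ - b₂ • m₁ with hv
  have hvne : v ≠ 0 := by
    intro h
    have h' : b₁ • m₂ = b₂ • m₁ := by rwa [sub_eq_zero] at h
    have hb : b₁ = b₂ := by
      have hn : ‖b₁ • m₂‖ = ‖b₂ • m₁‖ := by rw [h']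
      rw [norm_smul, norm_smul, hm₁, hm₂, mul_one, mul_one,
        Real.norm_eq_abs, Real.norm_eq_abs, abs_of_pos hb₁, abs_of_pos hb₂] at hn
      exact hn
    rw [hb] at h'
    exact hmm (smul_right_injective _ hb₂.ne' h').symm
  have hvpos : 0 < ‖v‖ := norm_pos_iff.mpr hvne
  have hκv : 0 < κ * ‖v‖ := mul_pos hκ hvpos
  have key : ∀ x : EuclideanSpace ℝ (Fin 3), ‖x‖ = 1 →
      b₁ / (1 - κ * ⟪m₁, x⟫) ≤ b₂ / (1 - κ * ⟪m₂, x⟫) →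
      (b₁ - b₂) / (κ * ‖v‖) ≤ ⟪x, (‖v‖)⁻¹ • v⟫ := by
    intro x hx hle
    have hd₁ : 0 < 1 - κ * ⟪m₁, x⟫ := by
      have h1 : ⟪m₁, x⟫ ≤ 1 := by
        have := real_inner_le_norm m₁ x
        rwa [hm₁, hx, one_mul] at this
      nlinarith
    have hd₂ : 0 < 1 - κ * ⟪m₂, x⟫ := by
      have h1 : ⟪m₂, x⟫ ≤ 1 := by
        have := real_inner_le_norm m₂ x
        rwa [hm₂, hx, one_mul] at this
      nlinarith
    rw [div_le_div_iff₀ hd₁ hd₂] at hle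
    have hinner : ⟪x, v⟫ = b₁ * ⟪x, m₂⟫ - b₂ * ⟪x, m₁⟫ := by
      rw [hv, inner_sub_right, real_inner_smul_right, real_inner_smul_right]
    have hkey : b₁ - b₂ ≤ κ * ⟪x, v⟫ := by
      rw [hinner, real_inner_comm m₁ x, real_inner_comm m₂ x]
      nlinarith
    rw [div_le_iff₀ hκv, real_inner_smul_right]
    have : (‖v‖)⁻¹ * ⟪x, v⟫ * (κ * ‖v‖) = κ * ⟪x, v⟫ := by
      field_simp
    rw [this]
    exact hkey
  have hunit : ∀ x : EuclideanSpace ℝ (Fin 3), ‖x‖ = 1 →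
      ⟪x, (‖v‖)⁻¹ • v⟫ ≤ 1 ∧ -1 ≤ ⟪x, (‖v‖)⁻¹ • v⟫ := by
    intro x hx
    have hnu : ‖(‖v‖)⁻¹ • v‖ = 1 := by
      rw [norm_smul, norm_inv, norm_norm, inv_mul_cancel₀ hvpos.ne']
    constructor
    · have := real_inner_le_norm x ((‖v‖)⁻¹ • v)
      rwa [hx, hnu, one_mul] at this
    · have h := abs_real_inner_le_norm x ((‖v‖)⁻¹ • v)
      rw [hx, hnu, one_mul] at h
      linarith [neg_abs_le (⟪x, (‖v‖)⁻¹ • v⟫ : ℝ)]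
  refine ⟨key, ?_, ?_⟩
  · rintro x ⟨hx, hle⟩
    have h1 := key x hx hle
    have h2 := (hunit x hx).1
    have h3 := (hunit x hx).2
    refine ⟨hx, ?_⟩
    by_cases hc : -1 ≤ (b₁ - b₂) / (κ * ‖v‖)
    · rw [Real.cos_arccos hc (h1.trans h2)]
      exact h1
    · push_neg at hc
      have : Real.arccos ((b₁ - b₂) / (κ * ‖v‖)) = Real.pi :=
        Real.arccos_eq_pi.mpr hc.le
      rw [this, Real.cos_pi]
      exact h3
  · rintro ⟨x, hx, hle⟩
    exact (key x hx hle).trans (hunit x hx).1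
end

section
/- Let 0 < κ < 1, N ≥ 2, m₁,…,m_N distinct unit vectors, and b, b* ∈ ℝ₊^N with b*_ℓ ≤ b_ℓ for one index ℓ and b*_i = b_i for i ≠ ℓ. Let ρ, ρ* be the polar radii of the refractors R(b) and R(b*) (minimum of the corresponding ellipsoid radii over Ω). Then ρ*(x) ≤ ρ(x) for all x ∈ Ω, and for every i ≠ ℓ and every nonsingular point x₀ of R(b*), if ρ*(x₀) = b_i/(1-κ m_i·x₀) then ρ(x₀) = b_i/(1-κ m_i·x₀); i.e. the tracing set T_{R(b*)}(m_i) is contained in T_{R(b)}(m_i) up to singular points. -/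
open scoped RealInnerProductSpace

theorem stmt6 (κ : ℝ) (hκ : 0 < κ) (hκ1 : κ < 1) (N : ℕ) (hN : 2 ≤ N)
    (m : Fin N → EuclideanSpace ℝ (Fin 3)) (hm : ∀ j, ‖m j‖ = 1)
    (hminj : Function.Injective m)
    (b bs : Fin N → ℝ) (hb : ∀ j, 0 < b j) (hbs : ∀ j, 0 < bs j)
    (ℓ : Fin N) (hℓ : bs ℓ ≤ b ℓ) (hrest : ∀ i, i ≠ ℓ → bs i = b i)
    (Ω : Set (EuclideanSpace ℝ (Fin 3)))
    (hΩ : ∀ x ∈ Ω, ‖x‖ = 1 ∧ ∀ j, κ ≤ ⟪m j, x⟫) :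
    (∀ x ∈ Ω, (⨅ j, bs j / (1 - κ * ⟪m j, x⟫)) ≤ (⨅ j, b j / (1 - κ * ⟪m j, x⟫))) ∧
    (∀ i, i ≠ ℓ → ∀ x₀ ∈ Ω,
      (∃! j, (⨅ j', bs j' / (1 - κ * ⟪m j', x₀⟫)) = bs j / (1 - κ * ⟪m j, x₀⟫)) →
      (⨅ j', bs j' / (1 - κ * ⟪m j', x₀⟫)) = bs i / (1 - κ * ⟪m i, x₀⟫) →
      (⨅ j', b j' / (1 - κ * ⟪m j', x₀⟫)) = b i / (1 - κ * ⟪m i, x₀⟫)) := by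
  haveI : Nonempty (Fin N) := ⟨⟨0, by omega⟩⟩
  have hble : ∀ j, bs j ≤ b j := by
    intro j
    by_cases h : j = ℓ
    · subst h; exact hℓ
    · exact (hrest j h).le
  have hden : ∀ x ∈ Ω, ∀ j, 0 < 1 - κ * ⟪m j, x⟫ := by
    intro x hx j
    have h1 : ⟪m j, x⟫ ≤ 1 := by
      calc ⟪m j, x⟫ ≤ ‖m j‖ * ‖x‖ := real_inner_le_norm _ _
        _ = 1 := by rw [hm j, (hΩ x hx).1, one_mul]
    nlinarith
  have hmono : ∀ x ∈ Ω,
      (⨅ j, bs j / (1 - κ * ⟪m j, x⟫)) ≤ (⨅ j, b j / (1 - κ * ⟪m j, x⟫)) := by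
    intro x hx
    apply ciInf_mono (Finite.bddBelow_range _)
    intro j
    exact div_le_div_of_nonneg_right (hble j) (hden x hx j).le |>.trans_eq rfl
  refine ⟨hmono, ?_⟩
  intro i hi x₀ hx₀ _ hinf
  have h1 : (⨅ j', b j' / (1 - κ * ⟪m j', x₀⟫)) ≤ b i / (1 - κ * ⟪m i, x₀⟫) :=
    ciInf_le (Finite.bddBelow_range _) i
  have h2 : b i / (1 - κ * ⟪m i, x₀⟫) ≤ (⨅ j', b j' / (1 - κ * ⟪m j', x₀⟫)) := by
    rw [← hrest i hi, ← hinf]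
    exact hmono x₀ hx₀
  linarith
end

section
/- Refractor polar radii are Lipschitz: if ρ : Ω → ℝ is defined on Ω ⊂ S² (with m·x ≥ κ on Ω for all relevant axes m) as ρ(x) = min_{1≤j≤N} bⱼ/(1 - κ mⱼ·x) with bⱼ > 0 and mⱼ unit vectors, then |ρ(x) - ρ(y)| ≤ C_κ (inf_Ω ρ) |x - y| for all x, y ∈ Ω, where C_κ depends only on κ ∈ (0,1). -/
open scoped RealInnerProductSpace

private lemma stmt10_denom (κ : ℝ) (hκ : 0 < κ) (hκ1 : κ < 1)
    {N : ℕ} {m : Fin N → EuclideanSpace ℝ (Fin 3)} (hm : ∀ j, ‖m j‖ = 1)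
    {x : EuclideanSpace ℝ (Fin 3)} (hx1 : ‖x‖ = 1) (hx2 : ∀ j, κ ≤ ⟪m j, x⟫) (j : Fin N) :
    1 - κ ≤ 1 - κ * ⟪m j, x⟫ ∧ 1 - κ * ⟪m j, x⟫ ≤ 1 - κ^2 := by
  have h1 : ⟪m j, x⟫ ≤ 1 := by
    have := real_inner_le_norm (m j) x
    rw [hm j, hx1] at this; linarith
  have h2 := hx2 j
  constructor <;> nlinarith

private lemma stmt10_aux (κ : ℝ) (hκ : 0 < κ) (hκ1 : κ < 1)
    {N : ℕ} {m : Fin N → EuclideanSpace ℝ (Fin 3)} {b : Fin N → ℝ}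
    (hN : 0 < N) (hm : ∀ j, ‖m j‖ = 1) (hb : ∀ j, 0 < b j)
    {x y : EuclideanSpace ℝ (Fin 3)}
    (hx1 : ‖x‖ = 1) (hx2 : ∀ j, κ ≤ ⟪m j, x⟫)
    (hy1 : ‖y‖ = 1) (hy2 : ∀ j, κ ≤ ⟪m j, y⟫) :
    (⨅ j, b j / (1 - κ * ⟪m j, x⟫)) - (⨅ j, b j / (1 - κ * ⟪m j, y⟫)) ≤
      κ / (1-κ)^2 * (⨅ j, b j / (1 - κ * ⟪m j, y⟫)) * ‖x - y‖ := by
  haveI : Nonempty (Fin N) := ⟨⟨0, hN⟩⟩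
  have hbdd : ∀ z : EuclideanSpace ℝ (Fin 3),
      BddBelow (Set.range fun j => b j / (1 - κ * ⟪m j, z⟫)) :=
    fun z => (Set.finite_range _).bddBelow
  obtain ⟨j0, hj0⟩ := Finite.exists_min (fun j => b j / (1 - κ * ⟪m j, y⟫))
  have hρy : (⨅ j, b j / (1 - κ * ⟪m j, y⟫)) = b j0 / (1 - κ * ⟪m j0, y⟫) :=
    le_antisymm (ciInf_le (hbdd y) j0) (le_ciInf hj0)
  have hρx : (⨅ j, b j / (1 - κ * ⟪m j, x⟫)) ≤ b j0 / (1 - κ * ⟪m j0, x⟫) :=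
    ciInf_le (hbdd x) j0
  set dx := 1 - κ * ⟪m j0, x⟫ with hdxdef
  set dy := 1 - κ * ⟪m j0, y⟫ with hdydef
  obtain ⟨hdx1, hdx2⟩ := stmt10_denom κ hκ hκ1 hm hx1 hx2 j0
  obtain ⟨hdy1, hdy2⟩ := stmt10_denom κ hκ hκ1 hm hy1 hy2 j0
  have hdxpos : 0 < dx := by nlinarith
  have hdypos : 0 < dy := by nlinarith
  have hdiff : dy - dx ≤ κ * ‖x - y‖ := by
    have h1 : ⟪m j0, x - y⟫ ≤ ‖x - y‖ := by
      have := real_inner_le_norm (m j0) (x - y)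
      rw [hm j0] at this; linarith
    have h2 : dy - dx = κ * ⟪m j0, x - y⟫ := by
      rw [hdxdef, hdydef, inner_sub_right]; ring
    nlinarith
  rw [hρy]
  have key : b j0 / dx - b j0 / dy ≤ κ / (1-κ)^2 * (b j0 / dy) * ‖x - y‖ := by
    have heq : b j0 / dx - b j0 / dy = b j0 * (dy - dx) / (dx * dy) := by
      field_simp
    have heq2 : κ / (1-κ)^2 * (b j0 / dy) * ‖x - y‖
        = κ * b j0 * ‖x - y‖ / ((1-κ)^2 * dy) := by
      field_simp
    have h1κ : (0:ℝ) < 1 - κ := by linarith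
    rw [heq, heq2, div_le_div_iff₀ (by positivity) (by positivity)]
    have hbj := hb j0
    have hn : (0:ℝ) ≤ ‖x - y‖ := norm_nonneg _
    have s1 : b j0 * (dy - dx) ≤ b j0 * (κ * ‖x - y‖) :=
      mul_le_mul_of_nonneg_left hdiff hbj.le
    have s2 : (1-κ)^2 ≤ dx := by nlinarith
    nlinarith [mul_le_mul_of_nonneg_right s1 (mul_nonneg (sq_nonneg (1-κ)) hdypos.le),
      mul_le_mul_of_nonneg_right s2
        (mul_nonneg (mul_nonneg (mul_nonneg hκ.le hbj.le) hn) hdypos.le)]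
  linarith

private lemma stmt10_comp (κ : ℝ) (hκ : 0 < κ) (hκ1 : κ < 1)
    {N : ℕ} {m : Fin N → EuclideanSpace ℝ (Fin 3)} {b : Fin N → ℝ}
    (hN : 0 < N) (hm : ∀ j, ‖m j‖ = 1) (hb : ∀ j, 0 < b j)
    {y z : EuclideanSpace ℝ (Fin 3)}
    (hy1 : ‖y‖ = 1) (hy2 : ∀ j, κ ≤ ⟪m j, y⟫)
    (hz1 : ‖z‖ = 1) (hz2 : ∀ j, κ ≤ ⟪m j, z⟫) :
    (⨅ j, b j / (1 - κ * ⟪m j, y⟫)) ≤ (1 + κ) * (⨅ j, b j / (1 - κ * ⟪m j, z⟫)) := by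
  haveI : Nonempty (Fin N) := ⟨⟨0, hN⟩⟩
  have hbdd : ∀ w : EuclideanSpace ℝ (Fin 3),
      BddBelow (Set.range fun j => b j / (1 - κ * ⟪m j, w⟫)) :=
    fun w => (Set.finite_range _).bddBelow
  obtain ⟨j1, hj1⟩ := Finite.exists_min (fun j => b j / (1 - κ * ⟪m j, z⟫))
  have hρz : (⨅ j, b j / (1 - κ * ⟪m j, z⟫)) = b j1 / (1 - κ * ⟪m j1, z⟫) :=
    le_antisymm (ciInf_le (hbdd z) j1) (le_ciInf hj1)
  have hρy : (⨅ j, b j / (1 - κ * ⟪m j, y⟫)) ≤ b j1 / (1 - κ * ⟪m j1, y⟫) :=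
    ciInf_le (hbdd y) j1
  obtain ⟨hdy1, hdy2⟩ := stmt10_denom κ hκ hκ1 hm hy1 hy2 j1
  obtain ⟨hdz1, hdz2⟩ := stmt10_denom κ hκ hκ1 hm hz1 hz2 j1
  rw [hρz]
  have hdypos : (0:ℝ) < 1 - κ * ⟪m j1, y⟫ := by nlinarith
  have hdzpos : (0:ℝ) < 1 - κ * ⟪m j1, z⟫ := by nlinarith
  have hbj := hb j1
  have : b j1 / (1 - κ * ⟪m j1, y⟫) ≤ (1 + κ) * (b j1 / (1 - κ * ⟪m j1, z⟫)) := by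
    rw [div_le_iff₀ hdypos] at *
    have h1 : (1 + κ) * (b j1 / (1 - κ * ⟪m j1, z⟫))
        = (1 + κ) * b j1 / (1 - κ * ⟪m j1, z⟫) := by ring
    rw [h1, div_mul_eq_mul_div, le_div_iff₀ hdzpos]
    nlinarith [mul_le_mul_of_nonneg_left hdz2 hbj.le,
      mul_le_mul_of_nonneg_left hdy1 (mul_nonneg (by linarith : (0:ℝ) ≤ 1+κ) hbj.le)]
  linarith

theorem stmt10 (κ : ℝ) (hκ : 0 < κ) (hκ1 : κ < 1) :
    ∃ C : ℝ, 0 < C ∧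
      ∀ (N : ℕ) (m : Fin N → EuclideanSpace ℝ (Fin 3)) (b : Fin N → ℝ)
        (Ω : Set (EuclideanSpace ℝ (Fin 3))),
        0 < N → (∀ j, ‖m j‖ = 1) → (∀ j, 0 < b j) →
        (∀ x ∈ Ω, ‖x‖ = 1 ∧ ∀ j, κ ≤ ⟪m j, x⟫) →
        ∀ x ∈ Ω, ∀ y ∈ Ω,
          |(⨅ j, b j / (1 - κ * ⟪m j, x⟫)) - (⨅ j, b j / (1 - κ * ⟪m j, y⟫))| ≤
            C * sInf ((fun z => ⨅ j, b j / (1 - κ * ⟪m j, z⟫)) '' Ω) * ‖x - y‖ := by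
  have h1κ : (0:ℝ) < 1 - κ := by linarith
  refine ⟨κ * (1 + κ) / (1 - κ)^2, by positivity, ?_⟩
  intro N m b Ω hN hm hb hΩ x hx y hy
  obtain ⟨hx1, hx2⟩ := hΩ x hx
  obtain ⟨hy1, hy2⟩ := hΩ y hy
  set ρ : EuclideanSpace ℝ (Fin 3) → ℝ := fun z => ⨅ j, b j / (1 - κ * ⟪m j, z⟫) with hρ
  have hsInf : ∀ w ∈ Ω, ρ w ≤ (1 + κ) * sInf (ρ '' Ω) := by
    intro w hw
    have h1 : (1 + κ)⁻¹ * ρ w ≤ sInf (ρ '' Ω) := by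
      refine le_csInf ⟨ρ x, Set.mem_image_of_mem ρ hx⟩ ?_
      rintro a ⟨z, hz, rfl⟩
      obtain ⟨hw1, hw2⟩ := hΩ w hw
      obtain ⟨hz1, hz2⟩ := hΩ z hz
      have := stmt10_comp κ hκ hκ1 hN hm hb hw1 hw2 hz1 hz2
      rw [inv_mul_le_iff₀ (by linarith : (0:ℝ) < 1 + κ)]
      exact this
    calc ρ w = (1 + κ) * ((1 + κ)⁻¹ * ρ w) := by field_simp
      _ ≤ (1 + κ) * sInf (ρ '' Ω) := by
          apply mul_le_mul_of_nonneg_left h1 (by linarith)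
  have hxy := stmt10_aux κ hκ hκ1 hN hm hb hx1 hx2 hy1 hy2
  have hyx := stmt10_aux κ hκ hκ1 hN hm hb hy1 hy2 hx1 hx2
  rw [norm_sub_rev y x] at hyx
  have hn : (0:ℝ) ≤ ‖x - y‖ := norm_nonneg _
  have hκκ : (0:ℝ) ≤ κ / (1-κ)^2 := by positivity
  have hCs : κ * (1 + κ) / (1 - κ)^2 * sInf (ρ '' Ω) * ‖x - y‖
      = κ / (1-κ)^2 * ((1 + κ) * sInf (ρ '' Ω)) * ‖x - y‖ := by ring
  rw [abs_sub_le_iff]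
  constructor
  · calc ρ x - ρ y ≤ κ / (1-κ)^2 * ρ y * ‖x - y‖ := hxy
      _ ≤ κ * (1 + κ) / (1 - κ)^2 * sInf (ρ '' Ω) * ‖x - y‖ := by
          rw [hCs]
          exact mul_le_mul_of_nonneg_right
            (mul_le_mul_of_nonneg_left (hsInf y hy) hκκ) hn
  · calc ρ y - ρ x ≤ κ / (1-κ)^2 * ρ x * ‖x - y‖ := hyx
      _ ≤ κ * (1 + κ) / (1 - κ)^2 * sInf (ρ '' Ω) * ‖x - y‖ := by
          rw [hCs]
          exact mul_le_mul_of_nonneg_right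
            (mul_le_mul_of_nonneg_left (hsInf x hx) hκκ) hn
end

section
/- Fix 0 < κ < 1, b_i, b_r > 0 and distinct unit vectors m_i, m_r. Define g(t) = (b_i + t - b_r)/(κ |(b_i+t) m_r - b_r m_i|) for t ∈ (-b_i, ∞). Then g is strictly increasing on (-b_i, ∞); more precisely g'(t) = b_r (b_i + t + b_r)(1 - m_i·m_r)/(κ Δ(t)³) > 0 where Δ(t) = |(b_i+t) m_r - b_r m_i|. -/
open scoped RealInnerProductSpace

/-!
Put `s = b_i + t` and `c = ⟪m_i, m_r⟫`. For unit vectors `Δ² = s² - 2sbc + b² = (s - b)² + 2sb(1 - c)`,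
which is positive when `s, b > 0` and `c < 1`. Since `Δ' = (s - bc)/Δ`, the quotient rule gives the
numerator `Δ² - (s - b)(s - bc) = b(s + b)(1 - c)`, which is positive, so `g` is strictly increasing.
-/

theorem HasDerivAt.norm {F : Type*} [NormedAddCommGroup F] [InnerProductSpace ℝ F]
    {f : ℝ → F} {f' : F} {x : ℝ} (hf : HasDerivAt f f' x) (hfx : f x ≠ 0) :
    HasDerivAt (‖f ·‖) (⟪f x, f'⟫ / ‖f x‖) x := by
  have h := hf.norm_sq.sqrt (by positivity)
  simp only [Real.sqrt_sq (norm_nonneg _)] at h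
  convert h using 1
  field_simp

section UnitVectors

variable {E : Type*} [NormedAddCommGroup E] [InnerProductSpace ℝ E] {u v : E}

theorem norm_smul_sub_smul_sq (hu : ‖u‖ = 1) (hv : ‖v‖ = 1) (a b : ℝ) :
    ‖a • v - b • u‖ ^ 2 = a ^ 2 - 2 * a * b * ⟪u, v⟫ + b ^ 2 := by
  rw [norm_sub_sq_real, real_inner_smul_left, real_inner_smul_right, norm_smul, norm_smul,
    real_inner_comm, hu, hv]
  simp only [mul_one, Real.norm_eq_abs, sq_abs]
  ring

theorem smul_sub_smul_ne_zero (hu : ‖u‖ = 1) (hv : ‖v‖ = 1) (huv : ⟪u, v⟫ < 1) {a b : ℝ}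
    (hab : 0 < a * b) : a • v - b • u ≠ 0 := by
  have hsq : 0 < ‖a • v - b • u‖ ^ 2 := by
    rw [norm_smul_sub_smul_sq hu hv]
    nlinarith [sq_nonneg (a - b), mul_pos hab (sub_pos.2 huv)]
  intro h
  simp [h] at hsq

theorem hasDerivAt_div_norm_smul_sub_smul (hu : ‖u‖ = 1) (hv : ‖v‖ = 1) {κ : ℝ} (hκ : κ ≠ 0)
    (b : ℝ) {s : ℝ} (hs : s • v - b • u ≠ 0) :
    HasDerivAt (fun s => (s - b) / (κ * ‖s • v - b • u‖))
      (b * (s + b) * (1 - ⟪u, v⟫) / (κ * ‖s • v - b • u‖ ^ 3)) s := by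
  have hline : HasDerivAt (fun s : ℝ => s • v - b • u) v s := by
    simpa using (hasDerivAt_id s).smul_const v |>.sub_const (b • u)
  have hnorm := (hline.norm hs).const_mul κ
  have hN : ‖s • v - b • u‖ ≠ 0 := norm_ne_zero_iff.2 hs
  refine (((hasDerivAt_id' s).sub_const b).div hnorm (mul_ne_zero hκ hN)).congr_deriv ?_
  have hinner : ⟪s • v - b • u, v⟫ = s - b * ⟪u, v⟫ := by
    rw [inner_sub_left, real_inner_smul_left, real_inner_smul_left, real_inner_self_eq_norm_sq, hv]
    ring
  have hsq := norm_smul_sub_smul_sq hu hv s b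
  rw [hinner]
  field_simp
  linear_combination hsq

end UnitVectors

theorem stmt11_general (κ bi br : ℝ) (hκ : 0 < κ) (hbr : 0 < br)
    (mi mr : EuclideanSpace ℝ (Fin 3)) (hmi : ‖mi‖ = 1) (hmr : ‖mr‖ = 1) (hne : mi ≠ mr) :
    StrictMonoOn (fun t => (bi + t - br) / (κ * ‖(bi + t) • mr - br • mi‖))
      (Set.Ioi (-bi)) ∧
    ∀ t ∈ Set.Ioi (-bi),
      HasDerivAt (fun t => (bi + t - br) / (κ * ‖(bi + t) • mr - br • mi‖))
        (br * (bi + t + br) * (1 - ⟪mi, mr⟫) / (κ * ‖(bi + t) • mr - br • mi‖ ^ 3)) t := by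
  have hc : ⟪mi, mr⟫ < 1 := (inner_lt_one_iff_real_of_norm_eq_one hmi hmr).2 hne
  have hderiv : ∀ t ∈ Set.Ioi (-bi),
      HasDerivAt (fun t => (bi + t - br) / (κ * ‖(bi + t) • mr - br • mi‖))
        (br * (bi + t + br) * (1 - ⟪mi, mr⟫) / (κ * ‖(bi + t) • mr - br • mi‖ ^ 3)) t := by
    intro t ht
    have hs : 0 < bi + t := by rw [Set.mem_Ioi] at ht; linarith
    exact (hasDerivAt_div_norm_smul_sub_smul hmi hmr hκ.ne' br
      (smul_sub_smul_ne_zero hmi hmr hc (mul_pos hs hbr))).comp_const_add bi t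
  refine ⟨strictMonoOn_of_hasDerivWithinAt_pos (convex_Ioi _)
    (fun t ht => (hderiv t ht).continuousAt.continuousWithinAt)
    (fun t ht => (hderiv t (interior_subset ht)).hasDerivWithinAt) ?_, hderiv⟩
  intro t ht
  rw [interior_Ioi, Set.mem_Ioi] at ht
  have hc' : 0 < 1 - ⟪mi, mr⟫ := sub_pos.2 hc
  have hN : 0 < ‖(bi + t) • mr - br • mi‖ :=
    norm_pos_iff.2 (smul_sub_smul_ne_zero hmi hmr hc (mul_pos (by linarith) hbr))
  have : 0 < bi + t + br := by linarith
  positivity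

theorem stmt11 (κ bi br : ℝ) (hκ : 0 < κ) (hκ1 : κ < 1) (hbi : 0 < bi) (hbr : 0 < br)
    (mi mr : EuclideanSpace ℝ (Fin 3)) (hmi : ‖mi‖ = 1) (hmr : ‖mr‖ = 1) (hne : mi ≠ mr) :
    StrictMonoOn (fun t => (bi + t - br) / (κ * ‖(bi + t) • mr - br • mi‖))
      (Set.Ioi (-bi)) ∧
    ∀ t ∈ Set.Ioi (-bi),
      HasDerivAt (fun t => (bi + t - br) / (κ * ‖(bi + t) • mr - br • mi‖))
        (br * (bi + t + br) * (1 - ⟪mi, mr⟫) / (κ * ‖(bi + t) • mr - br • mi‖ ^ 3)) t :=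
  stmt11_general κ bi br hκ hbr mi mr hmi hmr hne
end

section
/- Let 0 < κ < 1, b_i, b_r > 0 and m_i ≠ m_r unit vectors. If x lies on the boundary of V_r^t, i.e. (b_i+t)/(1-κ m_i·x) = b_r/(1-κ m_r·x), then with A_r = (b_i m_r - b_r m_i)/|b_i m_r - b_r m_i| and τ_r = arccos((b_i - b_r)/(κ|b_i m_r - b_r m_i|)) one has A_r · x = cos τ_r + t (1 - κ x·m_r)/(κ |b_i m_r - b_r m_i|). -/
open scoped RealInnerProductSpace

theorem stmt14 (κ bi br t : ℝ) (hκ : 0 < κ) (hκ1 : κ < 1) (hbi : 0 < bi) (hbr : 0 < br)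
    (mi mr : EuclideanSpace ℝ (Fin 3)) (hmi : ‖mi‖ = 1) (hmr : ‖mr‖ = 1) (hne : mi ≠ mr)
    (x : EuclideanSpace ℝ (Fin 3)) (hx : ‖x‖ = 1)
    (hτ : |(bi - br) / (κ * ‖bi • mr - br • mi‖)| ≤ 1)
    (hbd : (bi + t) / (1 - κ * ⟪mi, x⟫) = br / (1 - κ * ⟪mr, x⟫)) :
    ⟪(‖bi • mr - br • mi‖)⁻¹ • (bi • mr - br • mi), x⟫ =
      Real.cos (Real.arccos ((bi - br) / (κ * ‖bi • mr - br • mi‖))) +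
        t * (1 - κ * ⟪x, mr⟫) / (κ * ‖bi • mr - br • mi‖) := by
  have hNne : bi • mr - br • mi ≠ 0 := by
    intro h
    have h' : bi • mr = br • mi := by
      rw [sub_eq_zero] at h; exact h
    have hnorm : bi = br := by
      have := congrArg norm h'
      rw [norm_smul, norm_smul, hmi, hmr] at this
      simpa [abs_of_pos hbi, abs_of_pos hbr] using this
    apply hne
    subst hnorm
    have := h'
    have hbi' : bi ≠ 0 := ne_of_gt hbi
    exact (smul_right_injective _ hbi' this).symm
  have hN : (0:ℝ) < ‖bi • mr - br • mi‖ := norm_pos_iff.mpr hNne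
  have hdi : 1 - κ * ⟪mi, x⟫ ≠ 0 := by
    have h1 : ⟪mi, x⟫ ≤ 1 := by
      calc ⟪mi, x⟫ ≤ ‖mi‖ * ‖x‖ := real_inner_le_norm mi x
        _ = 1 := by rw [hmi, hx]; ring
    nlinarith
  have hdr : 1 - κ * ⟪mr, x⟫ ≠ 0 := by
    have h1 : ⟪mr, x⟫ ≤ 1 := by
      calc ⟪mr, x⟫ ≤ ‖mr‖ * ‖x‖ := real_inner_le_norm mr x
        _ = 1 := by rw [hmr, hx]; ring
    nlinarith
  rw [Real.cos_arccos (abs_le.mp hτ).1 (abs_le.mp hτ).2]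
  have hbd' : (bi + t) * (1 - κ * ⟪mr, x⟫) = br * (1 - κ * ⟪mi, x⟫) :=
    (div_eq_div_iff hdi hdr).mp hbd
  have hL : ⟪(‖bi • mr - br • mi‖)⁻¹ • (bi • mr - br • mi), x⟫ =
      (bi * ⟪mr, x⟫ - br * ⟪mi, x⟫) / ‖bi • mr - br • mi‖ := by
    rw [inner_smul_left, inner_sub_left, inner_smul_left, inner_smul_left]
    simp [RCLike.star_def]
    ring
  rw [hL]
  generalize hA : ⟪mr, x⟫ = a at *
  generalize hB : ⟪mi, x⟫ = b at *
  have hxa : ⟪x, mr⟫ = a := by rw [← hA, real_inner_comm]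
  rw [hxa]
  have hne' : κ * ‖bi • mr - br • mi‖ ≠ 0 := by positivity
  field_simp
  nlinarith [hbd', hN, hκ]
end
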